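/- arXiv:1202.6263 — 3 statements merged into one kernel-verified Lean document; each statement's English description precedes it below -/
import Mathlib

section
/- Let p̃ be a probability mass function on ℕ with finite support and let p̂ be the unique minimizer of Q over 𝒦. Then for all l ≥ 1, H_{p̂}(l−1) ≥ H_{p̃}(l−1), with equality whenever p̂ has a change of slope at l, i.e., whenever p̂(l) − p̂(l−1) < p̂(l+1) − p̂(l). -/
open scoped BigOperators

noncomputable section

/-- A discrete function `f : ℕ → ℝ` is convex if
`f(i+1) - 2 f(i) + f(i-1) ≥ 0` for every `i ≥ 1`. -/
def ConvexNat (f : ℕ → ℝ) : Prop :=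
  ∀ i : ℕ, 0 ≤ f (i + 2) - 2 * f (i + 1) + f i

/-- `𝒦`: convex, nonnegative functions on `ℕ` tending to `0` at infinity. -/
def MemK (f : ℕ → ℝ) : Prop :=
  ConvexNat f ∧ (∀ i, 0 ≤ f i) ∧ Filter.Tendsto f Filter.atTop (nhds 0)

/-- `𝒞`: elements of `𝒦` summing to one. -/
def MemC (f : ℕ → ℝ) : Prop := MemK f ∧ ∑' i, f i = 1

/-- The least squares criterion `Q(f) = (1/2) ∑ f(i)² − ∑ f(i) p̃(i)`. -/
def Crit (ptil f : ℕ → ℝ) : ℝ :=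
  (1 / 2) * ∑' i, (f i) ^ 2 - ∑' i, f i * ptil i

/-- A probability mass function on `ℕ` with finite support. -/
def IsFinPMF (p : ℕ → ℝ) : Prop :=
  (∀ i, 0 ≤ p i) ∧ (Function.support p).Finite ∧ ∑' i, p i = 1

/-- `s` is the maximum of the support of `p`. -/
def IsMaxSupport (p : ℕ → ℝ) (s : ℕ) : Prop :=
  p s ≠ 0 ∧ ∀ i, p i ≠ 0 → i ≤ s

/-- `F_p(j) = ∑_{i=0}^{j} p(i)`. -/
def Fcum (p : ℕ → ℝ) (j : ℕ) : ℝ := ∑ i ∈ Finset.range (j + 1), p i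

/-- `H_p(j) = ∑_{i=0}^{j} F_p(i)`. -/
def Hcum (p : ℕ → ℝ) (j : ℕ) : ℝ := ∑ i ∈ Finset.range (j + 1), Fcum p i


/-!
Perturb `p̂` in the direction of the tent `i ↦ (l - i)₊`, whose second difference is the indicator
of `l`. Then `p̂ + ε (l - ·)₊` is convex for every `ε ≥ 0`, and also for small `ε < 0` when `p̂`
has a change of slope at `l`; nonnegativity comes for free, since a convex sequence tending to `0` is
antitone. Along this direction `Q` is a quadratic in `ε` whose linear coefficient is
`∑_{i<l} (l - i)(p̂(i) - p̃(i)) = H_{p̂}(l-1) - H_{p̃}(l-1)`, so minimality of `p̂` makes it `≥ 0`,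
and `= 0` when both signs of `ε` are admissible.
-/

theorem ConvexNat.monotone_slope {f : ℕ → ℝ} (hf : ConvexNat f) :
    Monotone fun i => f (i + 1) - f i :=
  monotone_nat_of_le_succ fun i => by linarith [hf i]

theorem ConvexNat.antitone_of_tendsto_zero {f : ℕ → ℝ} (hf : ConvexNat f)
    (hlim : Filter.Tendsto f Filter.atTop (nhds 0)) : Antitone f := by
  have hslope : Filter.Tendsto (fun i => f (i + 1) - f i) Filter.atTop (nhds 0) := by
    simpa using (hlim.comp (Filter.tendsto_add_atTop_nat 1)).sub hlim
  exact antitone_nat_of_succ_le fun i => by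
    linarith [hf.monotone_slope.ge_of_tendsto hslope i]

theorem memK_of_convexNat_of_tendsto {f : ℕ → ℝ} (hf : ConvexNat f)
    (hlim : Filter.Tendsto f Filter.atTop (nhds 0)) : MemK f :=
  ⟨hf, (hf.antitone_of_tendsto_zero hlim).le_of_tendsto hlim, hlim⟩

/-- `(l - i)₊`: the subtraction in `ℕ` truncates, so `tent l` vanishes from `l` on. -/
def tent (l i : ℕ) : ℝ := ((l - i : ℕ) : ℝ)

theorem tent_eq_zero {l i : ℕ} (h : l ≤ i) : tent l i = 0 := by
  simp [tent, Nat.sub_eq_zero_of_le h]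

theorem tent_second_diff (l i : ℕ) :
    tent l (i + 2) - 2 * tent l (i + 1) + tent l i = if i + 1 = l then 1 else 0 := by
  rcases le_or_gt l i with h | h
  · simp [tent_eq_zero h, tent_eq_zero (show l ≤ i + 1 by omega),
      tent_eq_zero (show l ≤ i + 2 by omega), show i + 1 ≠ l by omega]
  rcases (Nat.succ_le_of_lt h).eq_or_lt with rfl | h'
  · simp [tent]
  obtain ⟨k, rfl⟩ : ∃ k, l = i + 2 + k := ⟨l - (i + 2), by omega⟩
  simp only [tent, show i + 1 ≠ i + 2 + k by omega, if_false,
    show i + 2 + k - (i + 2) = k by omega, show i + 2 + k - (i + 1) = k + 1 by omega,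
    show i + 2 + k - i = k + 2 by omega]
  push_cast
  ring

theorem ConvexNat.add_mul_tent {f : ℕ → ℝ} (hf : ConvexNat f) {m : ℕ} {ε : ℝ}
    (hε : 0 ≤ f (m + 2) - 2 * f (m + 1) + f m + ε) :
    ConvexNat fun i => f i + ε * tent (m + 1) i := by
  intro i
  have hsplit : f (i + 2) + ε * tent (m + 1) (i + 2) - 2 * (f (i + 1) + ε * tent (m + 1) (i + 1))
      + (f i + ε * tent (m + 1) i)
      = f (i + 2) - 2 * f (i + 1) + f i
        + ε * (tent (m + 1) (i + 2) - 2 * tent (m + 1) (i + 1) + tent (m + 1) i) := by ring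
  rw [hsplit, tent_second_diff]
  by_cases hi : i = m
  · subst hi
    simpa using hε
  · simpa [hi] using hf i

theorem tendsto_add_mul_tent {f : ℕ → ℝ} (hlim : Filter.Tendsto f Filter.atTop (nhds 0))
    (l : ℕ) (ε : ℝ) :
    Filter.Tendsto (fun i => f i + ε * tent l i) Filter.atTop (nhds 0) :=
  hlim.congr' <| by
    filter_upwards [Filter.eventually_ge_atTop l] with i hi
    simp [tent_eq_zero hi]

theorem Summable.tsum_add_of_ne_finset_zero {u v : ℕ → ℝ} (hu : Summable u) {s : Finset ℕ}
    (hv : ∀ i ∉ s, v i = 0) : ∑' i, (u i + v i) = ∑' i, u i + ∑ i ∈ s, v i := by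
  rw [hu.tsum_add (summable_of_ne_finset_zero hv), tsum_eq_sum hv]

theorem crit_add_mul (ptil f g : ℕ → ℝ) (hf2 : Summable fun i => f i ^ 2)
    (hfp : Summable fun i => f i * ptil i) {s : Finset ℕ} (hg : ∀ i ∉ s, g i = 0) (ε : ℝ) :
    Crit ptil (fun i => f i + ε * g i) =
      Crit ptil f + (ε * ∑ i ∈ s, g i * (f i - ptil i) + ε ^ 2 * ∑ i ∈ s, g i ^ 2 / 2) := by
  have hsq : ∑' i, (f i + ε * g i) ^ 2
      = ∑' i, f i ^ 2 + ∑ i ∈ s, (2 * ε * f i * g i + ε ^ 2 * g i ^ 2) := by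
    rw [← hf2.tsum_add_of_ne_finset_zero fun i hi => by simp [hg i hi]]
    exact tsum_congr fun i => by ring
  have hlin : ∑' i, (f i + ε * g i) * ptil i
      = ∑' i, f i * ptil i + ∑ i ∈ s, ε * g i * ptil i := by
    rw [← hfp.tsum_add_of_ne_finset_zero fun i hi => by simp [hg i hi]]
    exact tsum_congr fun i => by ring
  have hsums : 1 / 2 * ∑ i ∈ s, (2 * ε * f i * g i + ε ^ 2 * g i ^ 2)
      - ∑ i ∈ s, ε * g i * ptil i
      = ε * ∑ i ∈ s, g i * (f i - ptil i) + ε ^ 2 * ∑ i ∈ s, g i ^ 2 / 2 := by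
    simp only [Finset.mul_sum, ← Finset.sum_sub_distrib, ← Finset.sum_add_distrib]
    exact Finset.sum_congr rfl fun i _ => by ring
  rw [Crit, Crit, hsq, hlin]
  linarith

theorem summable_sq_add_mul {f g : ℕ → ℝ} (hf2 : Summable fun i => f i ^ 2) {s : Finset ℕ}
    (hg : ∀ i ∉ s, g i = 0) (ε : ℝ) : Summable fun i => (f i + ε * g i) ^ 2 :=
  (hf2.add (summable_of_ne_finset_zero (s := s)
    (f := fun i => 2 * ε * f i * g i + ε ^ 2 * g i ^ 2) fun i hi => by simp [hg i hi])).congr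
    fun i => by ring

theorem hcum_eq_sum_tent (p : ℕ → ℝ) (m : ℕ) :
    Hcum p m = ∑ i ∈ Finset.range (m + 1), tent (m + 1) i * p i := by
  induction m with
  | zero => simp [Hcum, Fcum, tent]
  | succ m ih =>
    rw [Hcum, Finset.sum_range_succ, ← Hcum, ih, Fcum, Finset.sum_range_succ p (m + 1),
      Finset.sum_range_succ (fun i => tent (m + 1 + 1) i * p i), ← add_assoc,
      ← Finset.sum_add_distrib]
    congr 1
    · exact Finset.sum_congr rfl fun i hi => by
        have hi : i < m + 1 := Finset.mem_range.mp hi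
        simp only [tent, show m + 1 + 1 - i = m + 1 - i + 1 by omega]
        push_cast
        ring
    · simp [tent]

theorem nonneg_of_forall_mul_add_sq_mul_nonneg {A C δ : ℝ} (hδ : 0 < δ)
    (h : ∀ ε, 0 < ε → ε ≤ δ → 0 ≤ ε * A + ε ^ 2 * C) : 0 ≤ A := by
  have hlim : Filter.Tendsto (fun ε => A + ε * C) (nhdsWithin 0 (Set.Ioi 0)) (nhds A) := by
    have : Filter.Tendsto (fun ε : ℝ => A + ε * C) (nhds 0) (nhds (A + 0 * C)) :=
      (continuous_const.add (continuous_id.mul continuous_const)).tendsto 0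
    simpa using this.mono_left nhdsWithin_le_nhds
  refine ge_of_tendsto hlim ?_
  filter_upwards [Ioc_mem_nhdsGT hδ] with ε ⟨hε, hεδ⟩
  have := h ε hε hεδ
  nlinarith

/-- Lemma 2 (direct part): for all `l ≥ 1`, `H_{p̂}(l−1) ≥ H_{p̃}(l−1)`, with equality
whenever `p̂` has a change of slope at `l`. -/
theorem stmt_12 (ptil : ℕ → ℝ) (hptil : IsFinPMF ptil)
    (phat : ℕ → ℝ) (hphatK : MemK phat)
    (hphat2 : Summable (fun i => (phat i) ^ 2))
    (hmin : ∀ f : ℕ → ℝ, MemK f → Summable (fun i => (f i) ^ 2) →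
      Crit ptil phat ≤ Crit ptil f) :
    ∀ l : ℕ, 1 ≤ l →
      Hcum ptil (l - 1) ≤ Hcum phat (l - 1) ∧
      (phat l - phat (l - 1) < phat (l + 1) - phat l →
        Hcum phat (l - 1) = Hcum ptil (l - 1)) := by
  intro l hl
  obtain ⟨m, rfl⟩ : ∃ m, l = m + 1 := ⟨l - 1, by omega⟩
  simp only [Nat.add_sub_cancel]
  set A := Hcum phat m - Hcum ptil m
  set C := ∑ i ∈ Finset.range (m + 1), tent (m + 1) i ^ 2 / 2 with hC
  have htent : ∀ i ∉ Finset.range (m + 1), tent (m + 1) i = 0 := fun i hi =>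
    tent_eq_zero (by simpa using hi)
  have hfp : Summable fun i => phat i * ptil i :=
    summable_of_ne_finset_zero (s := hptil.2.1.toFinset) fun i hi => by simp_all
  have hvar : ∀ ε, MemK (fun i => phat i + ε * tent (m + 1) i) → 0 ≤ ε * A + ε ^ 2 * C := by
    intro ε hK
    have hle := hmin _ hK (summable_sq_add_mul hphat2 htent ε)
    rw [crit_add_mul ptil phat _ hphat2 hfp htent] at hle
    have hlinear : ∑ i ∈ Finset.range (m + 1), tent (m + 1) i * (phat i - ptil i) = A := by
      simp only [A, hcum_eq_sum_tent, mul_sub, Finset.sum_sub_distrib]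
    rwa [hlinear, ← hC, le_add_iff_nonneg_right] at hle
  have hperturb : ∀ ε, 0 ≤ phat (m + 2) - 2 * phat (m + 1) + phat m + ε →
      MemK (fun i => phat i + ε * tent (m + 1) i) := fun ε hε =>
    memK_of_convexNat_of_tendsto (hphatK.1.add_mul_tent hε) (tendsto_add_mul_tent hphatK.2.2 _ ε)
  have hA : 0 ≤ A := nonneg_of_forall_mul_add_sq_mul_nonneg one_pos fun ε hε _ =>
    hvar ε (hperturb ε (by linarith [hphatK.1 m]))
  refine ⟨by linarith, fun hslope => ?_⟩
  have hA' : 0 ≤ -A := nonneg_of_forall_mul_add_sq_mul_nonneg (C := C)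
    (δ := phat (m + 2) - 2 * phat (m + 1) + phat m) (by linarith) fun ε _ hεδ => by
      linarith [hvar (-ε) (hperturb (-ε) (by linarith))]
  linarith
end
end

section
/- Let p̃ be a probability mass function on ℕ with finite support and let p̂ be the unique minimizer of Q over 𝒦. If p ∈ 𝒦 satisfies H_p(l−1) ≥ H_{p̃}(l−1) for all l ≥ 1, with equality whenever p(l) − p(l−1) < p(l+1) − p(l), then p = p̂. -/
open scoped BigOperators

noncomputable section

/-!
For `f ∈ 𝒦` and `q ≥ 0`, two summations by parts give
`∑ f(i) q(i) = ∑ (f(k) - f(k+1)) F_q(k) = ∑ Δ²f(j) H_q(j)` with `Δ²f ≥ 0`; in `[0, ∞]` the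
interchanges of summation are free, and finiteness of `∑ p²` comes out as a by-product.
For `f = p`, the equality `H_p(j) = H_{p̃}(j)` wherever `Δ²p(j) > 0` gives `∑ p² = ∑ p p̃`;
for `f = p̂`, `H_{p̃} ≤ H_p` gives `∑ p̂ p̃ ≤ ∑ p̂ p`. Hence
`Q(p̂) - Q(p) ≥ ½ ∑ (p̂ - p)²`, and minimality of `p̂` forces `p̂ = p`.
-/

open Filter Topology Finset
open scoped ENNReal

section Telescoping

lemma hasSum_ite_sub_succ_of_antitone {g : ℕ → ℝ} (hg : Antitone g)
    (hg0 : Tendsto g atTop (𝓝 0)) (i : ℕ) :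
    HasSum (fun k => if i ≤ k then g k - g (k + 1) else 0) (g i) := by
  rw [← hasSum_nat_add_iff' i]
  have hhead : ∑ k ∈ range i, (if i ≤ k then g k - g (k + 1) else 0) = 0 :=
    sum_eq_zero fun k hk => if_neg (by simpa using hk)
  rw [hhead, sub_zero]
  simp_rw [if_pos (Nat.le_add_left i _)]
  refine (hasSum_iff_tendsto_nat_of_nonneg (fun k => sub_nonneg.2 (hg (by omega))) _).2 ?_
  have hpartial (n : ℕ) : ∑ k ∈ range n, (g (k + i) - g (k + i + 1)) = g i - g (n + i) := by
    simpa [add_right_comm] using sum_range_sub' (fun k => g (k + i)) n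
  simp_rw [hpartial]
  simpa using tendsto_const_nhds.sub (hg0.comp (tendsto_add_atTop_nat i))

lemma ofReal_eq_tsum_ite_sub_succ_of_antitone {g : ℕ → ℝ} (hg : Antitone g)
    (hg0 : Tendsto g atTop (𝓝 0)) (i : ℕ) :
    ENNReal.ofReal (g i) = ∑' k, if i ≤ k then ENNReal.ofReal (g k - g (k + 1)) else 0 := by
  have hsum := hasSum_ite_sub_succ_of_antitone hg hg0 i
  have hnonneg : ∀ k, 0 ≤ if i ≤ k then g k - g (k + 1) else 0 := fun k => by
    split_ifs
    exacts [sub_nonneg.2 (hg k.le_succ), le_rfl]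
  rw [← hsum.tsum_eq, ENNReal.ofReal_tsum_of_nonneg hnonneg hsum.summable]
  exact tsum_congr fun k => by split_ifs <;> simp

lemma ENNReal.tsum_mul_eq_tsum_mul_sum_range {u a b : ℕ → ℝ≥0∞}
    (hu : ∀ i, u i = ∑' k, if i ≤ k then a k else 0) :
    ∑' i, u i * b i = ∑' k, a k * ∑ i ∈ range (k + 1), b i := by
  calc ∑' i, u i * b i = ∑' i, ∑' k, if i ≤ k then a k * b i else 0 := by
        simp_rw [hu, ← ENNReal.tsum_mul_right, ite_mul, zero_mul]
    _ = ∑' k, ∑' i, if i ≤ k then a k * b i else 0 := ENNReal.tsum_comm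
    _ = ∑' k, a k * ∑ i ∈ range (k + 1), b i := by
        refine tsum_congr fun k => ?_
        rw [tsum_eq_sum (s := range (k + 1)) fun i hi => if_neg (by simpa using hi),
          mul_sum]
        exact sum_congr rfl fun i hi => if_pos (by simpa [Nat.lt_succ_iff] using hi)

end Telescoping

def secondDiff (f : ℕ → ℝ) (j : ℕ) : ℝ := f (j + 2) - 2 * f (j + 1) + f j

lemma ConvexNat.antitone_sub_succ {f : ℕ → ℝ} (hf : ConvexNat f) :
    Antitone fun k => f k - f (k + 1) :=
  antitone_nat_of_succ_le fun k => by linarith [hf k]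

namespace MemK

variable {f : ℕ → ℝ} (hf : MemK f)
include hf

lemma secondDiff_nonneg (j : ℕ) : 0 ≤ secondDiff f j := hf.1 j

lemma nonneg (i : ℕ) : 0 ≤ f i := hf.2.1 i

lemma mul_nonneg {q : ℕ → ℝ} (hq : ∀ i, 0 ≤ q i) (i : ℕ) : 0 ≤ f i * q i :=
  _root_.mul_nonneg (hf.nonneg i) (hq i)

lemma tendsto_sub_succ : Tendsto (fun k => f k - f (k + 1)) atTop (𝓝 0) := by
  simpa using hf.2.2.sub (hf.2.2.comp (tendsto_add_atTop_nat 1))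

lemma antitone : Antitone f :=
  antitone_nat_of_succ_le fun k =>
    sub_nonneg.1 (hf.1.antitone_sub_succ.le_of_tendsto hf.tendsto_sub_succ k)

theorem tsum_ofReal_mul_eq_tsum_secondDiff_mul_Hcum {q : ℕ → ℝ} (hq : ∀ i, 0 ≤ q i) :
    ∑' i, ENNReal.ofReal (f i * q i) =
      ∑' j, ENNReal.ofReal (secondDiff f j) * ENNReal.ofReal (Hcum q j) := by
  have hFcum (k : ℕ) : ENNReal.ofReal (Fcum q k) = ∑ i ∈ range (k + 1), ENNReal.ofReal (q i) :=
    ENNReal.ofReal_sum_of_nonneg fun i _ => hq i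
  have hHcum (j : ℕ) :
      ENNReal.ofReal (Hcum q j) = ∑ k ∈ range (j + 1), ENNReal.ofReal (Fcum q k) :=
    ENNReal.ofReal_sum_of_nonneg fun k _ => sum_nonneg fun i _ => hq i
  have hsub_succ (k : ℕ) : ENNReal.ofReal (f k - f (k + 1)) =
      ∑' j, if k ≤ j then ENNReal.ofReal (secondDiff f j) else 0 := by
    rw [ofReal_eq_tsum_ite_sub_succ_of_antitone hf.1.antitone_sub_succ hf.tendsto_sub_succ k]
    congr! 4
    simp only [secondDiff]
    ring
  simp_rw [ENNReal.ofReal_mul (hf.nonneg _)]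
  rw [ENNReal.tsum_mul_eq_tsum_mul_sum_range
      (ofReal_eq_tsum_ite_sub_succ_of_antitone hf.antitone hf.2.2)]
  simp_rw [← hFcum]
  rw [ENNReal.tsum_mul_eq_tsum_mul_sum_range hsub_succ]
  simp_rw [hHcum]

lemma tsum_ofReal_mul_self_eq {q : ℕ → ℝ} (hq : ∀ i, 0 ≤ q i)
    (hslack : ∀ j, 0 < secondDiff f j → Hcum f j = Hcum q j) :
    ∑' i, ENNReal.ofReal (f i * f i) = ∑' i, ENNReal.ofReal (f i * q i) := by
  rw [hf.tsum_ofReal_mul_eq_tsum_secondDiff_mul_Hcum hf.nonneg,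
    hf.tsum_ofReal_mul_eq_tsum_secondDiff_mul_Hcum hq]
  refine tsum_congr fun j => ?_
  rcases (hf.secondDiff_nonneg j).eq_or_lt with hj | hj
  · simp [← hj]
  · rw [hslack j hj]

lemma tsum_ofReal_mul_le {q r : ℕ → ℝ} (hq : ∀ i, 0 ≤ q i) (hr : ∀ i, 0 ≤ r i)
    (hqr : ∀ j, Hcum q j ≤ Hcum r j) :
    ∑' i, ENNReal.ofReal (f i * q i) ≤ ∑' i, ENNReal.ofReal (f i * r i) := by
  rw [hf.tsum_ofReal_mul_eq_tsum_secondDiff_mul_Hcum hq,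
    hf.tsum_ofReal_mul_eq_tsum_secondDiff_mul_Hcum hr]
  gcongr with j
  exact hqr j

end MemK

section SquareSummable

variable {ι : Type*} {f g : ι → ℝ}

lemma summable_and_tsum_le_of_tsum_ofReal_le {u v : ι → ℝ} (hu : ∀ i, 0 ≤ u i)
    (hv : ∀ i, 0 ≤ v i) (hvs : Summable v)
    (h : ∑' i, ENNReal.ofReal (u i) ≤ ∑' i, ENNReal.ofReal (v i)) :
    Summable u ∧ ∑' i, u i ≤ ∑' i, v i := by
  have hus : Summable u := by
    lift u to ι → NNReal using hu
    simp only [ENNReal.ofReal_coe_nnreal] at h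
    rw [NNReal.summable_coe, ← ENNReal.tsum_coe_ne_top_iff_summable]
    exact ne_top_of_le_ne_top hvs.tsum_ofReal_ne_top h
  refine ⟨hus, ?_⟩
  rwa [← ENNReal.ofReal_tsum_of_nonneg hu hus, ← ENNReal.ofReal_tsum_of_nonneg hv hvs,
    ENNReal.ofReal_le_ofReal_iff (tsum_nonneg hv)] at h

lemma Summable.mul_of_summable_sq (hf : Summable fun i => f i ^ 2)
    (hg : Summable fun i => g i ^ 2) : Summable fun i => f i * g i :=
  ((hf.add hg).div_const 2).of_norm_bounded fun i => by
    rw [norm_mul, Real.norm_eq_abs, Real.norm_eq_abs]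
    nlinarith [two_mul_le_add_sq |f i| |g i|, sq_abs (f i), sq_abs (g i)]

lemma Summable.sub_sq (hf : Summable fun i => f i ^ 2) (hg : Summable fun i => g i ^ 2) :
    Summable fun i => (f i - g i) ^ 2 :=
  ((hf.sub ((hf.mul_of_summable_sq hg).mul_left 2)).add hg).congr fun i => by ring

lemma tsum_sub_sq (hf : Summable fun i => f i ^ 2) (hg : Summable fun i => g i ^ 2) :
    ∑' i, (f i - g i) ^ 2 = ∑' i, f i ^ 2 - 2 * ∑' i, f i * g i + ∑' i, g i ^ 2 := by
  have hfg := (hf.mul_of_summable_sq hg).mul_left 2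
  rw [← tsum_mul_left, ← hf.tsum_sub hfg, ← (hf.sub hfg).tsum_add hg]
  exact tsum_congr fun i => by ring

end SquareSummable

lemma eq_of_crit_le_of_tsum_mul_le {ptil phat p : ℕ → ℝ} (hphat2 : Summable fun i => phat i ^ 2)
    (hp2 : Summable fun i => p i ^ 2) (hp_ptil : ∑' i, p i * ptil i = ∑' i, p i ^ 2)
    (hphat_ptil : ∑' i, phat i * ptil i ≤ ∑' i, phat i * p i)
    (hcrit : Crit ptil phat ≤ Crit ptil p) : phat = p := by
  have hdist : ∑' i, (phat i - p i) ^ 2 ≤ 0 := by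
    rw [tsum_sub_sq hphat2 hp2]
    unfold Crit at hcrit
    linarith
  funext i
  have hi := (hphat2.sub_sq hp2).le_tsum i fun j _ => sq_nonneg _
  nlinarith [sq_nonneg (phat i - p i)]

/-- Lemma 2 (converse part): if `p ∈ 𝒦` satisfies `H_p(l−1) ≥ H_{p̃}(l−1)` for all
`l ≥ 1`, with equality whenever `p` has a change of slope at `l`, then `p = p̂`. -/
theorem stmt_13 (ptil : ℕ → ℝ) (hptil : IsFinPMF ptil)
    (phat : ℕ → ℝ) (hphatK : MemK phat)
    (hphat2 : Summable (fun i => (phat i) ^ 2))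
    (hmin : ∀ f : ℕ → ℝ, MemK f → Summable (fun i => (f i) ^ 2) →
      Crit ptil phat ≤ Crit ptil f)
    (p : ℕ → ℝ) (hp : MemK p)
    (hH : ∀ l : ℕ, 1 ≤ l → Hcum ptil (l - 1) ≤ Hcum p (l - 1))
    (hHeq : ∀ l : ℕ, 1 ≤ l → p l - p (l - 1) < p (l + 1) - p l →
      Hcum p (l - 1) = Hcum ptil (l - 1)) :
    p = phat := by
  obtain ⟨hptil_nonneg, hptil_fin, -⟩ := hptil
  have hptil_summable (g : ℕ → ℝ) : Summable fun i => g i * ptil i :=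
    summable_of_hasFiniteSupport (hptil_fin.subset (Function.support_mul_subset_right g ptil))
  have hslack (j : ℕ) (hj : 0 < secondDiff p j) : Hcum p j = Hcum ptil j := by
    have hkink : p (j + 1) - p j < p (j + 1 + 1) - p (j + 1) := by
      simp only [secondDiff] at hj
      linarith
    simpa using hHeq (j + 1) j.succ_pos (by simpa using hkink)
  have hp_self := hp.tsum_ofReal_mul_self_eq hptil_nonneg hslack
  obtain ⟨hpp, hpp_le⟩ := summable_and_tsum_le_of_tsum_ofReal_le (hp.mul_nonneg hp.nonneg)
    (hp.mul_nonneg hptil_nonneg) (hptil_summable p) hp_self.le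
  have hp2 : Summable fun i => p i ^ 2 := by simpa only [sq] using hpp
  have hp_ptil : ∑' i, p i * ptil i = ∑' i, p i ^ 2 := by
    simp only [sq]
    exact le_antisymm (summable_and_tsum_le_of_tsum_ofReal_le (hp.mul_nonneg hptil_nonneg)
      (hp.mul_nonneg hp.nonneg) hpp hp_self.ge).2 hpp_le
  have hphat_ptil := (summable_and_tsum_le_of_tsum_ofReal_le (hphatK.mul_nonneg hptil_nonneg)
    (hphatK.mul_nonneg hp.nonneg) (hphat2.mul_of_summable_sq hp2)
    (hphatK.tsum_ofReal_mul_le hptil_nonneg hp.nonneg fun j => by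
      simpa using hH (j + 1) j.succ_pos)).2
  exact (eq_of_crit_le_of_tsum_mul_le hphat2 hp2 hp_ptil hphat_ptil (hmin p hp hp2)).symm
end
end

section
/- Let p̃ be a probability mass function on ℕ with finite support and s̃ the maximum of its support. Let L ≥ s̃ + 1 and let π̂^L minimize Ψ over ℳ^L. If π̂^L is a probability measure, i.e., ∑_{j=1}^{L} π̂^L_j = 1, then π̂^L minimizes Ψ over all of ℳ: Ψ(π̂^L) ≤ Ψ(π) for every π ∈ ℳ with finite support; equivalently, π̂^L equals the unique mixing measure π̂ of the constrained least squares estimator p̂, characterized by p̂(i) = ∑_{j≥i+1} π̂_j T_j(i) for all i ≥ 0. -/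
open scoped BigOperators

noncomputable section

/-- The triangular function `T_j(i) = 2(j−i)/(j(j+1))` for `i < j`, `0` otherwise. -/
def Tri (j i : ℕ) : ℝ :=
  if i < j then 2 * ((j : ℝ) - (i : ℝ)) / ((j : ℝ) * ((j : ℝ) + 1)) else 0

/-- The mixture criterion
`Ψ(π) = (1/2) ∑_i (∑_{j≥i+1} π_j T_j(i))² − ∑_i p̃(i) ∑_{j≥i+1} π_j T_j(i)`
(recall `T_j(i) = 0` for `j ≤ i`). -/
def Psi (ptil : ℕ → ℝ) (π : ℕ → ℝ) : ℝ :=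
  (1 / 2) * ∑' i : ℕ, (∑' j : ℕ, π j * Tri j i) ^ 2 -
    ∑' i : ℕ, ptil i * ∑' j : ℕ, π j * Tri j i

/-- The directional derivative of `Ψ` at `μ` in the direction of the Dirac mass `δ_j`:
`d_j(Ψ)(μ) = ∑_{l=0}^{j−1} T_j(l) (∑_{j'≥l+1} μ_{j'} T_{j'}(l) − p̃(l))`. -/
def dPsi (ptil : ℕ → ℝ) (j : ℕ) (μ : ℕ → ℝ) : ℝ :=
  ∑ l ∈ Finset.range j, Tri j l * ((∑' j' : ℕ, μ j' * Tri j' l) - ptil l)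

/-- `ℳ^L`: nonnegative measures on `ℕ∖{0}` supported in `{1,…,L}`. -/
def MemML (L : ℕ) (π : ℕ → ℝ) : Prop :=
  π 0 = 0 ∧ (∀ j, 0 ≤ π j) ∧ ∀ j : ℕ, L < j → π j = 0

/-
Put `F = ∑ⱼ π̂ⱼ Tⱼ`, so that `Ψ(π) = Q(∑ⱼ πⱼ Tⱼ)`. Minimality of `π̂` on the orthant `ℳ^L` gives
the KKT conditions `dⱼΨ(π̂) ≥ 0` for `1 ≤ j ≤ L`, with equality where `π̂ⱼ > 0`. For `h = F − p̃`,
`d_kΨ(π̂)` is a positive multiple of `∑_{l<k} (k − l) hₗ`, and `∑ h = 0` because `F` and `p̃` both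
have mass one; two summations by parts then give `⟨h, g⟩ ≥ 0` for every `g ∈ 𝒦`, while
`⟨h, F⟩ = 0` by complementary slackness. Hence `Q(g) ≥ Q(F) + ½‖g − F‖²` on `𝒦 ∩ ℓ²`. Finitely
supported mixtures lie in `𝒦`, which gives the first claim, and `p̂` minimizes `Q` too, so
`‖p̂ − F‖ = 0`.
-/

open Finset Filter Topology

lemma tri_eq_max (j i : ℕ) : Tri j i = 2 / (j * (j + 1)) * max ((j : ℝ) - i) 0 := by
  unfold Tri
  split_ifs with h
  · have : (i : ℝ) < j := by exact_mod_cast h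
    rw [max_eq_left (by linarith)]
    ring
  · have : (j : ℝ) ≤ i := by exact_mod_cast not_lt.1 h
    rw [max_eq_right (by linarith), mul_zero]

lemma tri_nonneg (j i : ℕ) : 0 ≤ Tri j i := by
  rw [tri_eq_max]
  positivity

lemma tri_of_le {j i : ℕ} (h : j ≤ i) : Tri j i = 0 := by
  simp [Tri, not_lt.2 h]

lemma mul_tri_of_lt {j i : ℕ} (h : i < j) : (j : ℝ) * (j + 1) / 2 * Tri j i = j - i := by
  have : (0 : ℝ) < j := by exact_mod_cast (Nat.zero_le i).trans_lt h
  rw [Tri, if_pos h]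
  field_simp

lemma convexNat_tri (j : ℕ) : ConvexNat (Tri j) := by
  have hmax : ∀ x : ℝ, 0 ≤ max (x - 1) 0 - 2 * max x 0 + max (x + 1) 0 := by
    intro x
    rcases le_total 0 x with h | h
    · rw [max_eq_left h]; linarith [le_max_left (x - 1) 0, le_max_left (x + 1) 0]
    · rw [max_eq_right h]; linarith [le_max_right (x - 1) 0, le_max_right (x + 1) 0]
  intro i
  have hc : (0 : ℝ) ≤ 2 / (j * (j + 1)) := by positivity
  simp only [tri_eq_max, push_cast]
  refine (mul_nonneg hc (hmax (j - i - 1))).trans_eq ?_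
  ring_nf

lemma sum_range_tri {j : ℕ} (hj : 1 ≤ j) : ∑ i ∈ range j, Tri j i = 1 := by
  have gauss : ∀ n : ℕ, ∑ i ∈ range n, (i : ℝ) = n * (n - 1) / 2 := by
    intro n
    induction n with
    | zero => simp
    | succ n ih => rw [sum_range_succ, ih]; push_cast; ring
  have : (0 : ℝ) < j := by exact_mod_cast hj
  rw [sum_congr rfl fun i hi => by rw [Tri, if_pos (mem_range.1 hi)], ← sum_div, ← mul_sum,
    sum_sub_distrib, gauss, sum_const, card_range, nsmul_eq_mul]
  field_simp
  ring

lemma convexNat_sum {ι : Type*} (s : Finset ι) {c : ι → ℝ} {f : ι → ℕ → ℝ}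
    (hc : ∀ j ∈ s, 0 ≤ c j) (hf : ∀ j ∈ s, ConvexNat (f j)) :
    ConvexNat fun i => ∑ j ∈ s, c j * f j i := by
  intro i
  have h : ∀ j ∈ s, 0 ≤ c j * f j (i + 2) - 2 * (c j * f j (i + 1)) + c j * f j i := fun j hj => by
    nlinarith [mul_nonneg (hc j hj) (hf j hj i)]
  simpa only [sum_add_distrib, sum_sub_distrib, mul_sum] using sum_nonneg h

lemma MemK.antitone_s19 {g : ℕ → ℝ} (hg : MemK g) : Antitone g := by
  have hmono : Monotone fun m => g (m + 1) - g m :=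
    monotone_nat_of_le_succ fun n => by have := hg.1 n; linarith
  have hlim : Tendsto (fun m => g (m + 1) - g m) atTop (𝓝 0) := by
    simpa using (hg.2.2.comp (tendsto_add_atTop_nat 1)).sub hg.2.2
  exact antitone_nat_of_succ_le fun n => sub_nonpos.1 (hmono.ge_of_tendsto hlim n)

lemma sum_range_mul_eq_abel (a g : ℕ → ℝ) (N : ℕ) :
    ∑ l ∈ range N, a l * g l = (∑ l ∈ range N, a l) * g N -
      ∑ m ∈ range N, (∑ l ∈ range (m + 1), a l) * (g (m + 1) - g m) := by
  induction N with
  | zero => simp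
  | succ n ih => simp only [sum_range_succ _ n, ih]; ring

lemma sum_range_sum_range_succ (h : ℕ → ℝ) (k : ℕ) :
    ∑ m ∈ range k, ∑ l ∈ range (m + 1), h l = ∑ l ∈ range k, ((k : ℝ) - l) * h l := by
  induction k with
  | zero => simp
  | succ k ih =>
    have hstep : ∑ l ∈ range k, (((k + 1 : ℕ) : ℝ) - l) * h l
        = ∑ l ∈ range k, ((k : ℝ) - l) * h l + ∑ l ∈ range k, h l := by
      rw [← sum_add_distrib]
      exact sum_congr rfl fun _ _ => by push_cast; ring
    rw [sum_range_succ, ih, sum_range_succ (fun l => (((k + 1 : ℕ) : ℝ) - l) * h l), hstep,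
      sum_range_succ h k]
    push_cast
    ring

/-- On `range N`, a `g ∈ 𝒦` is a nonnegative combination of the constant `1` and the hinges
`l ↦ (k - l)₊` with `k ≤ N`; the two summations by parts below make this explicit. -/
lemma sum_mul_nonneg_of_memK {h g : ℕ → ℝ} {N : ℕ} (hg : MemK g)
    (hsum : ∑ l ∈ range N, h l = 0)
    (hW : ∀ k ≤ N, 0 ≤ ∑ l ∈ range k, ((k : ℝ) - l) * h l) :
    0 ≤ ∑ l ∈ range N, h l * g l := by
  simp only [← sum_range_sum_range_succ] at hW
  rw [sum_range_mul_eq_abel, hsum, zero_mul, zero_sub, sum_range_mul_eq_abel]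
  have hslope : g (N + 1) - g N ≤ 0 := sub_nonpos.2 (hg.antitone_s19 N.le_succ)
  have hsecond : 0 ≤ ∑ k ∈ range N, (∑ m ∈ range (k + 1), ∑ l ∈ range (m + 1), h l) *
      (g (k + 1 + 1) - g (k + 1) - (g (k + 1) - g k)) :=
    sum_nonneg fun k hk => mul_nonneg (hW (k + 1) (mem_range.1 hk)) (by linarith [hg.1 k])
  nlinarith [mul_nonpos_of_nonneg_of_nonpos (hW N le_rfl) hslope]

lemma crit_sub_crit {p f g : ℕ → ℝ} {N : ℕ} (hp : ∀ i, N ≤ i → p i = 0)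
    (hf : ∀ i, N ≤ i → f i = 0) (hg : Summable fun i => g i ^ 2) :
    Crit p g - Crit p f =
      ∑ i ∈ range N, (f i - p i) * (g i - f i) + 1 / 2 * ∑' i, (g i - f i) ^ 2 := by
  have hfin : ∀ {u : ℕ → ℝ}, (∀ i, N ≤ i → u i = 0) → ∑' i, u i = ∑ i ∈ range N, u i :=
    fun hu => tsum_eq_sum fun i hi => hu i (by simpa using hi)
  have hsq : ∑' i, (g i - f i) ^ 2 =
      ∑' i, g i ^ 2 + ∑ i ∈ range N, ((g i - f i) ^ 2 - g i ^ 2) := by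
    have hd : ∀ i, N ≤ i → (g i - f i) ^ 2 - g i ^ 2 = 0 := fun i hi => by simp [hf i hi]
    rw [← hfin hd, ← hg.tsum_add (summable_of_ne_finset_zero (s := range N)
      fun i hi => hd i (by simpa using hi))]
    exact tsum_congr fun i => by ring
  unfold Crit
  rw [hsq, hfin (u := fun i => g i * p i) fun i hi => by simp [hp i hi],
    hfin (u := fun i => f i ^ 2) fun i hi => by simp [hf i hi],
    hfin (u := fun i => f i * p i) fun i hi => by simp [hf i hi]]
  have hid : ∑ i ∈ range N, ((f i - p i) * (g i - f i) + 1 / 2 * ((g i - f i) ^ 2 - g i ^ 2)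
      + g i * p i + 1 / 2 * f i ^ 2 - f i * p i) = 0 := sum_eq_zero fun i _ => by ring
  simp only [sum_add_distrib, sum_sub_distrib, ← mul_sum] at hid ⊢
  linarith

/-- The paper's `∑_{j≥i+1} π_j T_j(i)`. Since `Tri 0 = 0`, the value `π 0` plays no role. -/
def triMix (π : ℕ → ℝ) (i : ℕ) : ℝ := ∑' j, π j * Tri j i

lemma psi_eq_crit_triMix (p π : ℕ → ℝ) : Psi p π = Crit p (triMix π) := by
  simp only [Psi, Crit, triMix, mul_comm (p _)]

lemma triMix_eq_sum {π : ℕ → ℝ} {s : Finset ℕ} (hs : ∀ j ∉ s, π j = 0) (i : ℕ) :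
    triMix π i = ∑ j ∈ s, π j * Tri j i :=
  tsum_eq_sum fun j hj => by rw [hs j hj, zero_mul]

lemma triMix_eq_zero_of_le {π : ℕ → ℝ} {N i : ℕ} (hN : ∀ j, N < j → π j = 0) (hi : N ≤ i) :
    triMix π i = 0 := by
  refine (tsum_congr fun j => ?_).trans tsum_zero
  rcases le_or_gt j N with hj | hj
  · rw [tri_of_le (hj.trans hi), mul_zero]
  · rw [hN j hj, zero_mul]

lemma memK_triMix {π : ℕ → ℝ} {N : ℕ} (hnn : ∀ j, 0 ≤ π j) (hN : ∀ j, N < j → π j = 0) :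
    MemK (triMix π) := by
  have hs : ∀ j ∉ range (N + 1), π j = 0 := fun j hj => hN j (by simpa [Nat.lt_succ_iff] using hj)
  refine ⟨?_, fun i => tsum_nonneg fun j => mul_nonneg (hnn j) (tri_nonneg j i), ?_⟩
  · rw [funext (triMix_eq_sum hs)]
    exact convexNat_sum _ (fun j _ => hnn j) fun j _ => convexNat_tri j
  · exact tendsto_const_nhds.congr' <| (eventually_ge_atTop N).mono
      fun i hi => (triMix_eq_zero_of_le hN hi).symm

lemma summable_sq_triMix {π : ℕ → ℝ} {N : ℕ} (hN : ∀ j, N < j → π j = 0) :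
    Summable fun i => triMix π i ^ 2 :=
  summable_of_ne_finset_zero (s := range N) fun i hi => by
    rw [triMix_eq_zero_of_le hN (by simpa using hi), sq, mul_zero]

lemma triMix_add_single {π : ℕ → ℝ} {N j : ℕ} (hN : ∀ j, N < j → π j = 0) (hj : j ≤ N)
    (t : ℝ) (i : ℕ) : triMix (π + Pi.single j t) i = triMix π i + t * Tri j i := by
  have hs : ∀ {μ : ℕ → ℝ}, (∀ j, N < j → μ j = 0) → ∀ j ∉ range (N + 1), μ j = 0 :=
    fun hμ j hj => hμ j (by simpa [Nat.lt_succ_iff] using hj)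
  have hN' : ∀ j', N < j' → (π + Pi.single j t : ℕ → ℝ) j' = 0 := fun j' hj' => by
    simp [hN j' hj', (hj.trans_lt hj').ne']
  rw [triMix_eq_sum (hs hN'), triMix_eq_sum (hs hN)]
  simp only [Pi.add_apply, add_mul, sum_add_distrib, Pi.single_apply, ite_mul, zero_mul,
    sum_ite_eq', mem_range, Nat.lt_succ_iff.2 hj, if_true]

lemma MemML.eq_zero_of_notMem_Icc {L : ℕ} {π : ℕ → ℝ} (hπ : MemML L π) {j : ℕ}
    (hj : j ∉ Icc 1 L) : π j = 0 := by
  rcases Nat.eq_zero_or_pos j with rfl | hj0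
  · exact hπ.1
  · exact hπ.2.2 j (by simp only [mem_Icc, not_and, not_le] at hj; exact hj hj0)

lemma sum_range_mul_triMix {L : ℕ} {π : ℕ → ℝ} (hπ : MemML L π) (h : ℕ → ℝ) :
    ∑ l ∈ range L, h l * triMix π l = ∑ j ∈ Icc 1 L, π j * ∑ l ∈ range L, Tri j l * h l := by
  simp only [triMix_eq_sum fun _ => hπ.eq_zero_of_notMem_Icc, mul_sum]
  rw [sum_comm]
  exact sum_congr rfl fun _ _ => sum_congr rfl fun _ _ => by ring

lemma sum_range_triMix {L : ℕ} {π : ℕ → ℝ} (hπ : MemML L π) :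
    ∑ i ∈ range L, triMix π i = ∑ j ∈ Icc 1 L, π j := by
  simpa using (sum_range_mul_triMix hπ fun _ => 1).trans <| sum_congr rfl fun j hj => by
    obtain ⟨hj1, hjL⟩ := mem_Icc.1 hj
    rw [← sum_subset (range_subset_range.2 hjL)
      fun i _ hi => by simp [tri_of_le (by simpa using hi)]]
    simp [sum_range_tri hj1]

lemma dPsi_eq_sum_range (p μ : ℕ → ℝ) {j N : ℕ} (hj : j ≤ N) :
    dPsi p j μ = ∑ l ∈ range N, Tri j l * (triMix μ l - p l) :=
  sum_subset (range_subset_range.2 hj) fun l _ hl => by rw [tri_of_le (by simpa using hl), zero_mul]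

lemma sum_range_sub_mul_eq_dPsi (p μ : ℕ → ℝ) (k : ℕ) :
    ∑ l ∈ range k, ((k : ℝ) - l) * (triMix μ l - p l) = k * (k + 1) / 2 * dPsi p k μ := by
  rw [dPsi, mul_sum]
  exact sum_congr rfl fun l hl => by rw [← mul_tri_of_lt (mem_range.1 hl), mul_assoc]; rfl

lemma memML_add_single {L j : ℕ} {π : ℕ → ℝ} {t : ℝ} (hπ : MemML L π) (hj1 : 1 ≤ j)
    (hjL : j ≤ L) (ht : -π j ≤ t) : MemML L (π + Pi.single j t) := by
  refine ⟨by simp [hπ.1, show 0 ≠ j by omega], fun j' => ?_,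
    fun j' hj' => by simp [hπ.2.2 j' hj', (hjL.trans_lt hj').ne']⟩
  rcases eq_or_ne j' j with rfl | h
  · simp only [Pi.add_apply, Pi.single_eq_same]; linarith
  · simp [h, hπ.2.1 j']

lemma psi_add_single_sub {p π : ℕ → ℝ} {L j : ℕ} (hpL : ∀ i, L ≤ i → p i = 0)
    (hπ : MemML L π) (hjL : j ≤ L) (t : ℝ) :
    Psi p (π + Pi.single j t) - Psi p π =
      t * dPsi p j π + t ^ 2 * (∑ l ∈ range j, Tri j l ^ 2 / 2) := by
  have hF := fun i => triMix_eq_zero_of_le (i := i) hπ.2.2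
  have hsum : Summable fun i => (triMix π i + t * Tri j i) ^ 2 :=
    summable_of_ne_finset_zero (s := range L) fun i hi => by
      have hi : L ≤ i := by simpa using hi
      simp [hF i hi, tri_of_le (hjL.trans hi)]
  have hsq : ∑' i, (t * Tri j i) ^ 2 = ∑ l ∈ range j, (t * Tri j l) ^ 2 :=
    tsum_eq_sum fun i hi => by simp [tri_of_le (by simpa using hi : j ≤ i)]
  rw [psi_eq_crit_triMix, psi_eq_crit_triMix, funext (triMix_add_single hπ.2.2 hjL t),
    crit_sub_crit hpL hF hsum, dPsi_eq_sum_range p π hjL]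
  simp only [add_sub_cancel_left, hsq, mul_sum]
  congr 1 <;> exact sum_congr rfl fun _ _ => by ring

lemma nonneg_of_forall_mul_add_sq_mul_nonneg_s19 {b c δ : ℝ} (hδ : 0 < δ)
    (h : ∀ t, 0 < t → t ≤ δ → 0 ≤ t * b + t ^ 2 * c) : 0 ≤ b := by
  have hlim : Tendsto (fun t => b + t * c) (𝓝[>] 0) (𝓝 b) := by
    refine ((by fun_prop : Continuous fun t : ℝ => b + t * c).tendsto' 0 b ?_).mono_left
      nhdsWithin_le_nhds
    simp
  refine ge_of_tendsto hlim ?_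
  filter_upwards [Ioo_mem_nhdsGT hδ] with t ht
  exact nonneg_of_mul_nonneg_right (by linarith [h t ht.1 ht.2.le]) ht.1

section Minimizer

variable {p π : ℕ → ℝ} {L : ℕ}

lemma dPsi_nonneg_of_isMinOn (hpL : ∀ i, L ≤ i → p i = 0) (hπ : MemML L π)
    (hmin : IsMinOn (Psi p) {μ | MemML L μ} π) {j : ℕ} (hj1 : 1 ≤ j) (hjL : j ≤ L) :
    0 ≤ dPsi p j π :=
  nonneg_of_forall_mul_add_sq_mul_nonneg_s19 (c := ∑ l ∈ range j, Tri j l ^ 2 / 2) one_pos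
    fun t ht _ => by
    have := isMinOn_iff.1 hmin _ (memML_add_single hπ hj1 hjL (by linarith [hπ.2.1 j]))
    linarith [psi_add_single_sub hpL hπ hjL t]

lemma dPsi_eq_zero_of_isMinOn (hpL : ∀ i, L ≤ i → p i = 0) (hπ : MemML L π)
    (hmin : IsMinOn (Psi p) {μ | MemML L μ} π) {j : ℕ} (hj1 : 1 ≤ j) (hjL : j ≤ L)
    (hπj : 0 < π j) : dPsi p j π = 0 := by
  refine le_antisymm ?_ (dPsi_nonneg_of_isMinOn hpL hπ hmin hj1 hjL)
  suffices 0 ≤ -dPsi p j π by linarith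
  refine nonneg_of_forall_mul_add_sq_mul_nonneg_s19 (c := ∑ l ∈ range j, Tri j l ^ 2 / 2) hπj
    fun t _ htπ => ?_
  have := isMinOn_iff.1 hmin _ (memML_add_single hπ hj1 hjL (by linarith : -π j ≤ -t))
  linarith [psi_add_single_sub hpL hπ hjL (-t)]

lemma sum_range_sub_mul_triMix_eq_zero (hpL : ∀ i, L ≤ i → p i = 0) (hπ : MemML L π)
    (hmin : IsMinOn (Psi p) {μ | MemML L μ} π) :
    ∑ l ∈ range L, (triMix π l - p l) * triMix π l = 0 := by
  rw [sum_range_mul_triMix hπ]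
  refine sum_eq_zero fun j hj => ?_
  obtain ⟨hj1, hjL⟩ := mem_Icc.1 hj
  rw [← dPsi_eq_sum_range p π hjL]
  rcases (hπ.2.1 j).eq_or_lt with h | h
  · rw [← h, zero_mul]
  · rw [dPsi_eq_zero_of_isMinOn hpL hπ hmin hj1 hjL h, mul_zero]

lemma crit_triMix_add_le (hpL : ∀ i, L ≤ i → p i = 0) (hπ : MemML L π)
    (hmin : IsMinOn (Psi p) {μ | MemML L μ} π) (hp1 : ∑' i, p i = 1)
    (hprob : ∑ j ∈ Icc 1 L, π j = 1) {g : ℕ → ℝ} (hg : MemK g) (hg2 : Summable fun i => g i ^ 2) :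
    Crit p (triMix π) + 1 / 2 * ∑' i, (g i - triMix π i) ^ 2 ≤ Crit p g := by
  have hmass : ∑ l ∈ range L, (triMix π l - p l) = 0 := by
    have hpsum : ∑' i, p i = ∑ i ∈ range L, p i :=
      tsum_eq_sum fun i hi => hpL i (by simpa using hi)
    rw [sum_sub_distrib, sum_range_triMix hπ, hprob, ← hpsum, hp1, sub_self]
  have hW : ∀ k ≤ L, 0 ≤ ∑ l ∈ range k, ((k : ℝ) - l) * (triMix π l - p l) := fun k hk => by
    rw [sum_range_sub_mul_eq_dPsi]
    rcases Nat.eq_zero_or_pos k with rfl | hk1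
    · simp
    · exact mul_nonneg (by positivity) (dPsi_nonneg_of_isMinOn hpL hπ hmin hk1 hk)
  have hdual := sum_mul_nonneg_of_memK hg hmass hW
  have horth := sum_range_sub_mul_triMix_eq_zero hpL hπ hmin
  have hsplit : ∑ i ∈ range L, (triMix π i - p i) * (g i - triMix π i) =
      ∑ i ∈ range L, (triMix π i - p i) * g i - ∑ i ∈ range L, (triMix π i - p i) * triMix π i := by
    rw [← sum_sub_distrib]
    exact sum_congr rfl fun _ _ => by ring
  linarith [crit_sub_crit hpL (fun i => triMix_eq_zero_of_le hπ.2.2) hg2]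

end Minimizer

/-- Theorem 6: if `L ≥ s̃ + 1` and the minimizer `π̂^L` of `Ψ` over `ℳ^L` is a
probability measure, then `π̂^L` minimizes `Ψ` over all finitely supported nonnegative
measures, and it is the mixing measure of the constrained LSE `p̂`:
`p̂(i) = ∑_{j≥i+1} π̂^L_j T_j(i)` for all `i`. -/
theorem stmt_19 (ptil : ℕ → ℝ) (hptil : IsFinPMF ptil)
    (stil : ℕ) (hstil : IsMaxSupport ptil stil)
    (L : ℕ) (hL : stil + 1 ≤ L)
    (πhat : ℕ → ℝ) (hmem : MemML L πhat)
    (hmin : ∀ μ : ℕ → ℝ, MemML L μ → Psi ptil πhat ≤ Psi ptil μ)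
    (hprob : ∑ j ∈ Finset.Icc 1 L, πhat j = 1)
    (phat : ℕ → ℝ) (hphatK : MemK phat)
    (hphat2 : Summable (fun i => (phat i) ^ 2))
    (hqmin : ∀ f : ℕ → ℝ, MemK f → Summable (fun i => (f i) ^ 2) →
      Crit ptil phat ≤ Crit ptil f) :
    (∀ π : ℕ → ℝ, π 0 = 0 → (∀ j, 0 ≤ π j) → (Function.support π).Finite →
      Psi ptil πhat ≤ Psi ptil π) ∧
    (∀ i : ℕ, phat i = ∑' j : ℕ, πhat j * Tri j i) := by
  have hpL : ∀ i, L ≤ i → ptil i = 0 := fun i hi => by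
    by_contra h
    linarith [hstil.2 i h]
  have hbound := fun {g} (hg : MemK g) =>
    crit_triMix_add_le hpL hmem (isMinOn_iff.2 hmin) hptil.2.2 hprob hg
  refine ⟨fun π _ hπnn hπfin => ?_, fun i => ?_⟩
  · obtain ⟨N, hN⟩ := hπfin.bddAbove
    have hπN : ∀ j, N < j → π j = 0 := fun j hj => by_contra fun h => (hN h).not_gt hj
    rw [psi_eq_crit_triMix, psi_eq_crit_triMix]
    have hsq : 0 ≤ ∑' i, (triMix π i - triMix πhat i) ^ 2 := tsum_nonneg fun _ => sq_nonneg _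
    linarith [hbound (memK_triMix hπnn hπN) (summable_sq_triMix hπN)]
  · have hF2 := summable_sq_triMix hmem.2.2
    have hsum : Summable fun i => (phat i - triMix πhat i) ^ 2 :=
      ((hphat2.mul_left 2).add (hF2.mul_left 2)).of_nonneg_of_le (fun _ => sq_nonneg _)
        fun i => by nlinarith [sq_nonneg (phat i + triMix πhat i)]
    have hsq_le : ∑' i, (phat i - triMix πhat i) ^ 2 ≤ 0 := by
      linarith [hbound hphatK hphat2, hqmin _ (memK_triMix hmem.2.1 hmem.2.2) hF2]
    have := (hsum.le_tsum i fun j _ => sq_nonneg _).trans hsq_le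
    exact sub_eq_zero.1 (pow_eq_zero_iff two_ne_zero |>.1 (le_antisymm this (sq_nonneg _)))
end
end
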